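/- Let S be a random variable that is strictly positive almost surely and let α ∈ [0,1] be such that E[S^α], E[S^{1+α}], E[S^{1+2α}], E[|log S|·S^α], E[|log S|·S^{1+α}] and E[|log S|·S^{1+2α}] are all finite. Then 2·E[log(S)·S^{1+2α}]·E[S^α]·E[S^{1+α}] ≥ E[S^{1+α}]·E[S^{1+2α}]·E[log(S)·S^α] + E[S^α]·E[S^{1+2α}]·E[log(S)·S^{1+α}]. -/

import Mathlib

/-!
Chebyshev's association inequality: if `f` and `g` vary together, then integrating
`w x * w y * (f x - f y) * (g x - g y) ≥ 0` over `μ ⊗ μ` gives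
`(∫ f w) (∫ g w) ≤ (∫ w) (∫ f g w)` for every weight `w ≥ 0`.
With `w = S^p`, `f = log S` and `g = S^(r-p)` this says that the `S^p`-tilted mean of `log S`
increases with `p`: `E[log S · S^p] E[S^r] ≤ E[S^p] E[log S · S^r]` for `p ≤ r`.
The theorem is the sum of the cases `(p, r) = (α, 1 + 2α)` and `(1 + α, 1 + 2α)`, multiplied by
`E[S^(1+α)]` and `E[S^α]` respectively.
-/

open MeasureTheory Real

section

variable {Ω : Type*} [MeasurableSpace Ω] {μ : Measure Ω}

theorem integral_mul_mul_integral_mul_le [SigmaFinite μ] {f g w : Ω → ℝ} {s : Set Ω}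
    (hfg : MonovaryOn f g s) (hs : ∀ᵐ x ∂μ, x ∈ s) (hw : 0 ≤ᵐ[μ] w)
    (hw_int : Integrable w μ) (hfw : Integrable (fun x => f x * w x) μ)
    (hgw : Integrable (fun x => g x * w x) μ)
    (hfgw : Integrable (fun x => f x * g x * w x) μ) :
    (∫ x, f x * w x ∂μ) * (∫ x, g x * w x ∂μ) ≤ (∫ x, w x ∂μ) * ∫ x, f x * g x * w x ∂μ := by
  have h_fst := Measure.quasiMeasurePreserving_fst (μ := μ) (ν := μ)
  have h_snd := Measure.quasiMeasurePreserving_snd (μ := μ) (ν := μ)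
  have key : ∫ z, f z.1 * w z.1 * (g z.2 * w z.2) + g z.1 * w z.1 * (f z.2 * w z.2) ∂μ.prod μ ≤
      ∫ z, f z.1 * g z.1 * w z.1 * w z.2 + w z.1 * (f z.2 * g z.2 * w z.2) ∂μ.prod μ := by
    refine integral_mono_ae ((hfw.mul_prod hgw).add (hgw.mul_prod hfw))
      ((hfgw.mul_prod hw_int).add (hw_int.mul_prod hfgw)) ?_
    filter_upwards [h_fst.ae hs, h_snd.ae hs, h_fst.ae hw, h_snd.ae hw] with z hs₁ hs₂ hw₁ hw₂
    have := mul_le_mul_of_nonneg_left (hfg.mul_add_mul_le_mul_add_mul hs₁ hs₂)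
      (mul_nonneg hw₁ hw₂)
    linarith
  rw [integral_add (hfw.mul_prod hgw) (hgw.mul_prod hfw),
    integral_add (hfgw.mul_prod hw_int) (hw_int.mul_prod hfgw),
    integral_prod_mul (fun x => f x * w x) (fun x => g x * w x),
    integral_prod_mul (fun x => g x * w x) (fun x => f x * w x),
    integral_prod_mul (fun x => f x * g x * w x) w,
    integral_prod_mul w (fun x => f x * g x * w x)] at key
  linarith

variable {S : Ω → ℝ}

theorem aemeasurable_of_rpow_of_rpow_one_add (hS : ∀ᵐ ω ∂μ, 0 < S ω) {p : ℝ}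
    (hp : AEMeasurable (fun ω => S ω ^ p) μ) (hp₁ : AEMeasurable (fun ω => S ω ^ (1 + p)) μ) :
    AEMeasurable S μ := by
  refine (hp₁.div hp).congr ?_
  filter_upwards [hS] with ω hω
  rw [Pi.div_apply, rpow_add hω, rpow_one, mul_div_cancel_right₀ _ (rpow_pos_of_pos hω p).ne']

theorem integrable_log_mul_rpow (hS : AEMeasurable S μ) (hS_pos : ∀ᵐ ω ∂μ, 0 < S ω) {p : ℝ}
    (h : Integrable (fun ω => |log (S ω)| * S ω ^ p) μ) :
    Integrable (fun ω => log (S ω) * S ω ^ p) μ := by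
  refine h.mono' (hS.log.mul (hS.pow_const p)).aestronglyMeasurable ?_
  filter_upwards [hS_pos] with ω hω
  rw [norm_mul, norm_eq_abs, norm_of_nonneg (rpow_pos_of_pos hω p).le]

theorem integral_log_mul_rpow_mul_integral_rpow_le [SigmaFinite μ]
    (hS : AEMeasurable S μ) (hS_pos : ∀ᵐ ω ∂μ, 0 < S ω) {p r : ℝ} (hpr : p ≤ r)
    (hp : Integrable (fun ω => S ω ^ p) μ) (hr : Integrable (fun ω => S ω ^ r) μ)
    (hlp : Integrable (fun ω => |log (S ω)| * S ω ^ p) μ)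
    (hlr : Integrable (fun ω => |log (S ω)| * S ω ^ r) μ) :
    (∫ ω, log (S ω) * S ω ^ p ∂μ) * (∫ ω, S ω ^ r ∂μ) ≤
      (∫ ω, S ω ^ p ∂μ) * ∫ ω, log (S ω) * S ω ^ r ∂μ := by
  have hmono : MonovaryOn (fun ω => log (S ω)) (fun ω => S ω ^ (r - p)) {ω | 0 < S ω} := by
    intro i hi j hj hlt
    refine log_le_log hi (le_of_lt ?_)
    by_contra! hji
    exact hlt.not_ge (rpow_le_rpow (le_of_lt hj) hji (sub_nonneg.mpr hpr))
  have hgw : (fun ω => S ω ^ (r - p) * S ω ^ p) =ᵐ[μ] fun ω => S ω ^ r := by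
    filter_upwards [hS_pos] with ω hω
    rw [← rpow_add hω, sub_add_cancel]
  have hfgw : (fun ω => log (S ω) * S ω ^ (r - p) * S ω ^ p) =ᵐ[μ]
      fun ω => log (S ω) * S ω ^ r := by
    filter_upwards [hgw] with ω hω
    rw [mul_assoc, hω]
  have h := integral_mul_mul_integral_mul_le hmono hS_pos
    (hS_pos.mono fun ω hω => (rpow_pos_of_pos hω p).le) hp
    (integrable_log_mul_rpow hS hS_pos hlp) (hr.congr hgw.symm)
    ((integrable_log_mul_rpow hS hS_pos hlr).congr hfgw.symm)
  rwa [integral_congr_ae hgw, integral_congr_ae hfgw] at h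

end

theorem log_moment_inequality_derivative_general
    {Ω : Type*} [MeasurableSpace Ω] (μ : Measure Ω) [IsProbabilityMeasure μ]
    (S : Ω → ℝ) (hSpos : ∀ᵐ ω ∂μ, 0 < S ω)
    (α : ℝ) (hα0 : 0 ≤ α)
    (hm1 : Integrable (fun ω => S ω ^ α) μ)
    (hm2 : Integrable (fun ω => S ω ^ (1 + α)) μ)
    (hm3 : Integrable (fun ω => S ω ^ (1 + 2 * α)) μ)
    (hl1 : Integrable (fun ω => |Real.log (S ω)| * S ω ^ α) μ)
    (hl2 : Integrable (fun ω => |Real.log (S ω)| * S ω ^ (1 + α)) μ)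
    (hl3 : Integrable (fun ω => |Real.log (S ω)| * S ω ^ (1 + 2 * α)) μ) :
    (∫ ω, S ω ^ (1 + α) ∂μ) * (∫ ω, S ω ^ (1 + 2 * α) ∂μ) *
          (∫ ω, Real.log (S ω) * S ω ^ α ∂μ) +
        (∫ ω, S ω ^ α ∂μ) * (∫ ω, S ω ^ (1 + 2 * α) ∂μ) *
          (∫ ω, Real.log (S ω) * S ω ^ (1 + α) ∂μ) ≤
      2 * (∫ ω, Real.log (S ω) * S ω ^ (1 + 2 * α) ∂μ) * (∫ ω, S ω ^ α ∂μ) *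
        (∫ ω, S ω ^ (1 + α) ∂μ) := by
  have hS := aemeasurable_of_rpow_of_rpow_one_add hSpos hm1.aemeasurable hm2.aemeasurable
  have h₁ := integral_log_mul_rpow_mul_integral_rpow_le hS hSpos (by linarith) hm1 hm3 hl1 hl3
  have h₂ := integral_log_mul_rpow_mul_integral_rpow_le hS hSpos (by linarith) hm2 hm3 hl2 hl3
  have hE₁ : 0 ≤ ∫ ω, S ω ^ α ∂μ :=
    integral_nonneg_of_ae (hSpos.mono fun ω hω => (rpow_pos_of_pos hω α).le)
  have hE₂ : 0 ≤ ∫ ω, S ω ^ (1 + α) ∂μ :=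
    integral_nonneg_of_ae (hSpos.mono fun ω hω => (rpow_pos_of_pos hω (1 + α)).le)
  linarith [mul_le_mul_of_nonneg_left h₁ hE₂, mul_le_mul_of_nonneg_left h₂ hE₁]

/-- For `S > 0` a.s. and `α ∈ [0,1]`, with all relevant expectations finite,
`2·E[log S · S^(1+2α)]·E[S^α]·E[S^(1+α)]
  ≥ E[S^(1+α)]·E[S^(1+2α)]·E[log S · S^α] + E[S^α]·E[S^(1+2α)]·E[log S · S^(1+α)]`,
expressing nonnegativity of the derivative of `α ↦ E[S^(1+2α)]/(E[S^α]E[S^(1+α)])`. -/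
theorem log_moment_inequality_derivative
    {Ω : Type*} [MeasurableSpace Ω] (μ : Measure Ω) [IsProbabilityMeasure μ]
    (S : Ω → ℝ) (hSpos : ∀ᵐ ω ∂μ, 0 < S ω)
    (α : ℝ) (hα0 : 0 ≤ α) (hα1 : α ≤ 1)
    (hm1 : Integrable (fun ω => S ω ^ α) μ)
    (hm2 : Integrable (fun ω => S ω ^ (1 + α)) μ)
    (hm3 : Integrable (fun ω => S ω ^ (1 + 2 * α)) μ)
    (hl1 : Integrable (fun ω => |Real.log (S ω)| * S ω ^ α) μ)
    (hl2 : Integrable (fun ω => |Real.log (S ω)| * S ω ^ (1 + α)) μ)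
    (hl3 : Integrable (fun ω => |Real.log (S ω)| * S ω ^ (1 + 2 * α)) μ) :
    (∫ ω, S ω ^ (1 + α) ∂μ) * (∫ ω, S ω ^ (1 + 2 * α) ∂μ) *
          (∫ ω, Real.log (S ω) * S ω ^ α ∂μ) +
        (∫ ω, S ω ^ α ∂μ) * (∫ ω, S ω ^ (1 + 2 * α) ∂μ) *
          (∫ ω, Real.log (S ω) * S ω ^ (1 + α) ∂μ) ≤
      2 * (∫ ω, Real.log (S ω) * S ω ^ (1 + 2 * α) ∂μ) * (∫ ω, S ω ^ α ∂μ) *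
        (∫ ω, S ω ^ (1 + α) ∂μ) :=
  log_moment_inequality_derivative_general μ S hSpos α hα0 hm1 hm2 hm3 hl1 hl2 hl3
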